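/- Let U ⊆ B(K₁,K₂) be a weak* closed subspace, A ⊆ B(K₁) and B ⊆ B(K₂) von Neumann algebras with B·U·A ⊆ U, and T ∈ B(K₁,K₂). If Q is a projection in B′ and P is a projection in A′ with Q U P = 0 for all U ∈ U, then ‖QTP‖ ≤ r_U(T). -/

import Mathlib

open scoped InnerProductSpace
open ContinuousLinearMap

/-- `r_U(T)`: the supremum of `|⟨Tξ,η⟩|` over unit vectors `ξ, η` annihilating `U`. -/
noncomputable def rU {H K : Type*} [NormedAddCommGroup H] [InnerProductSpace ℂ H]
    [NormedAddCommGroup K] [InnerProductSpace ℂ K]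
    (U : Set (H →L[ℂ] K)) (T : H →L[ℂ] K) : ℝ :=
  sSup {c : ℝ | ∃ ξ : H, ∃ η : K, ‖ξ‖ = 1 ∧ ‖η‖ = 1 ∧
    (∀ X ∈ U, ⟪X ξ, η⟫_ℂ = 0) ∧ c = ‖(⟪T ξ, η⟫_ℂ)‖}

/-- An orthogonal projection: a self-adjoint idempotent. -/
def IsProjection {K : Type*} [NormedAddCommGroup K] [InnerProductSpace ℂ K] [CompleteSpace K]
    (P : K →L[ℂ] K) : Prop :=
  IsSelfAdjoint P ∧ P ∘L P = P

/-- A set of operators is weak* closed (equivalently, for linear subspaces, closed in the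
weak operator topology). -/
def IsWeakStarClosed {H K : Type*} [NormedAddCommGroup H] [InnerProductSpace ℂ H]
    [NormedAddCommGroup K] [InnerProductSpace ℂ K] (U : Set (H →L[ℂ] K)) : Prop :=
  IsClosed ((ContinuousLinearMapWOT.ofCLM : (H →L[ℂ] K) → (H →WOT[ℂ] K)) '' U)

/-! Since `Q` is self-adjoint, `⟪QTPx, y⟫ = ⟪T(Px), Qy⟫`, and the pair `(Px, Qy)` annihilates `U`
because `⟪X(Px), Qy⟫ = ⟪QXPx, y⟫ = 0`. So each such inner product is bounded by `r_U(T)‖Px‖‖Qy‖`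
(rescale to unit vectors), and projections are contractions. -/

section rU

variable {H K : Type*} [NormedAddCommGroup H] [InnerProductSpace ℂ H]
  [NormedAddCommGroup K] [InnerProductSpace ℂ K]

theorem rU_nonneg (U : Set (H →L[ℂ] K)) (T : H →L[ℂ] K) : 0 ≤ rU U T :=
  Real.sSup_nonneg <| by rintro c ⟨ξ, η, -, -, -, rfl⟩; exact norm_nonneg _

theorem norm_inner_le_rU_of_norm_eq_one (U : Set (H →L[ℂ] K)) (T : H →L[ℂ] K) {ξ : H} {η : K}
    (hξ : ‖ξ‖ = 1) (hη : ‖η‖ = 1) (hU : ∀ X ∈ U, ⟪X ξ, η⟫_ℂ = 0) :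
    ‖⟪T ξ, η⟫_ℂ‖ ≤ rU U T := by
  refine le_csSup ⟨‖T‖, ?_⟩ ⟨ξ, η, hξ, hη, hU, rfl⟩
  rintro c ⟨ξ', η', hξ', hη', -, rfl⟩
  simpa [hξ', hη'] using (norm_inner_le_norm (T ξ') η').trans
    (mul_le_mul_of_nonneg_right (T.le_opNorm ξ') (norm_nonneg η'))

theorem norm_inner_le_rU_mul (U : Set (H →L[ℂ] K)) (T : H →L[ℂ] K) {ξ : H} {η : K}
    (hU : ∀ X ∈ U, ⟪X ξ, η⟫_ℂ = 0) :
    ‖⟪T ξ, η⟫_ℂ‖ ≤ rU U T * ‖ξ‖ * ‖η‖ := by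
  rcases eq_or_ne ξ 0 with rfl | hξ
  · simp
  rcases eq_or_ne η 0 with rfl | hη
  · simp
  have hξ' : ‖ξ‖ ≠ 0 := norm_ne_zero_iff.mpr hξ
  have hη' : ‖η‖ ≠ 0 := norm_ne_zero_iff.mpr hη
  have key := norm_inner_le_rU_of_norm_eq_one U T (ξ := (‖ξ‖⁻¹ : ℂ) • ξ) (η := (‖η‖⁻¹ : ℂ) • η)
    (by simp [norm_smul, hξ']) (by simp [norm_smul, hη'])
    (fun X hX => by simp [hU X hX])
  simp only [map_smul, inner_smul_left, inner_smul_right, norm_mul, Complex.norm_conj,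
    norm_inv, Complex.norm_real, norm_norm] at key
  rw [inv_mul_le_iff₀ (by positivity), inv_mul_le_iff₀ (by positivity)] at key
  linarith

end rU

namespace IsProjection

variable {K : Type*} [NormedAddCommGroup K] [InnerProductSpace ℂ K] [CompleteSpace K]
  {P : K →L[ℂ] K}

theorem inner_map_left (hP : IsProjection P) (x y : K) : ⟪P x, y⟫_ℂ = ⟪x, P y⟫_ℂ :=
  hP.1.isSymmetric x y

theorem norm_apply_le (hP : IsProjection P) (x : K) : ‖P x‖ ≤ ‖x‖ :=
  (P.le_opNorm x).trans <| mul_le_of_le_one_left (norm_nonneg x)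
    (IsStarProjection.norm_le P ⟨hP.2, hP.1⟩)

end IsProjection

theorem norm_compress_le_rU_general {K₁ K₂ : Type*}
    [NormedAddCommGroup K₁] [InnerProductSpace ℂ K₁] [CompleteSpace K₁]
    [NormedAddCommGroup K₂] [InnerProductSpace ℂ K₂] [CompleteSpace K₂]
    (U : Submodule ℂ (K₁ →L[ℂ] K₂))
    (T : K₁ →L[ℂ] K₂)
    (Q : K₂ →L[ℂ] K₂) (P : K₁ →L[ℂ] K₁)
    (hQ : IsProjection Q)
    (hP : IsProjection P)
    (hQUP : ∀ X ∈ U, Q ∘L X ∘L P = 0) :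
    ‖Q ∘L T ∘L P‖ ≤ rU (U : Set (K₁ →L[ℂ] K₂)) T := by
  refine opNorm_le_of_re_inner_le (rU_nonneg _ T) fun x y hx hy => ?_
  have hann : ∀ X ∈ (U : Set (K₁ →L[ℂ] K₂)), ⟪X (P x), Q y⟫_ℂ = 0 := fun X hX => by
    rw [← hQ.inner_map_left, show Q (X (P x)) = 0 from DFunLike.congr_fun (hQUP X hX) x,
      inner_zero_left]
  calc RCLike.re ⟪(Q ∘L T ∘L P) x, y⟫_ℂ
      ≤ ‖⟪T (P x), Q y⟫_ℂ‖ := by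
        rw [comp_apply, comp_apply, hQ.inner_map_left]
        exact RCLike.re_le_norm _
    _ ≤ rU (U : Set (K₁ →L[ℂ] K₂)) T * ‖P x‖ * ‖Q y‖ := norm_inner_le_rU_mul _ T hann
    _ ≤ rU (U : Set (K₁ →L[ℂ] K₂)) T := by
        have hr := rU_nonneg (U : Set (K₁ →L[ℂ] K₂)) T
        refine (mul_le_of_le_one_right (mul_nonneg hr (norm_nonneg _)) ?_).trans
          (mul_le_of_le_one_right hr ?_)
        · exact hy ▸ hQ.norm_apply_le y
        · exact hx ▸ hP.norm_apply_le x

/-- One inequality of Lemma 1.3: for projections `Q ∈ ℬ'`, `P ∈ 𝒜'` with `Q U P = 0`,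
one has `‖QTP‖ ≤ r_U(T)`. -/
theorem norm_compress_le_rU {K₁ K₂ : Type*}
    [NormedAddCommGroup K₁] [InnerProductSpace ℂ K₁] [CompleteSpace K₁]
    [NormedAddCommGroup K₂] [InnerProductSpace ℂ K₂] [CompleteSpace K₂]
    (𝒜 : VonNeumannAlgebra K₁) (ℬ : VonNeumannAlgebra K₂)
    (U : Submodule ℂ (K₁ →L[ℂ] K₂))
    (hclosed : IsWeakStarClosed (U : Set (K₁ →L[ℂ] K₂)))
    (hmod : ∀ B ∈ ℬ, ∀ X ∈ U, ∀ A ∈ 𝒜, B ∘L X ∘L A ∈ U)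
    (T : K₁ →L[ℂ] K₂)
    (Q : K₂ →L[ℂ] K₂) (P : K₁ →L[ℂ] K₁)
    (hQ : IsProjection Q) (hQ' : Q ∈ ℬ.commutant)
    (hP : IsProjection P) (hP' : P ∈ 𝒜.commutant)
    (hQUP : ∀ X ∈ U, Q ∘L X ∘L P = 0) :
    ‖Q ∘L T ∘L P‖ ≤ rU (U : Set (K₁ →L[ℂ] K₂)) T :=
  norm_compress_le_rU_general U T Q P hQ hP hQUP
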